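/- Let a, b ∈ (−1/2, 1/2) and let ν ≥ 0 be a real number. Then the modified Jacobi coefficient satisfies q_ν^{(a,b)}(t) > 0 for every t ∈ (0,π). -/

import Mathlib

open Real Set

/-- The coefficient in the modified Jacobi differential equation. -/
noncomputable def jacobiQ (a b ν t : ℝ) : ℝ :=
  ν * (a + b + ν + 1)
    + (1 / 2) * (1 / Real.sin t) ^ 2 * (-(b - a) * Real.cos t + a + b + 1)
    - (1 / 4) * ((a + b + 1) * (Real.cos t / Real.sin t)
        - (b - a) * (1 / Real.sin t)) ^ 2

/-! In half-angle variables the coefficient takes the form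
`q = (ν + (a + b + 1) / 2)² + (1/4 - a²) / (4 sin²(t/2)) + (1/4 - b²) / (4 cos²(t/2))`,
a square plus two terms that are positive on `(0, π)` exactly when `|a|, |b| < 1/2`. -/

lemma four_mul_cos_half_sq (x : ℝ) : 4 * cos (x / 2) ^ 2 = 2 * (1 + cos x) := by
  rw [cos_sq, mul_div_cancel₀ x two_ne_zero]
  ring

lemma four_mul_sin_half_sq (x : ℝ) : 4 * sin (x / 2) ^ 2 = 2 * (1 - cos x) := by
  linear_combination 4 * sin_sq_add_cos_sq (x / 2) - four_mul_cos_half_sq x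

lemma jacobiQ_eq_div_sin_sq (a b ν t : ℝ) :
    jacobiQ a b ν t = ν * (a + b + ν + 1)
      + (2 * (a + b + 1 - (b - a) * cos t) - ((a + b + 1) * cos t - (b - a)) ^ 2)
        / (4 * sin t ^ 2) := by
  rw [jacobiQ]
  ring

lemma jacobiQ_eq_half_angle (a b ν t : ℝ) (ht : sin t ≠ 0) :
    jacobiQ a b ν t = (ν + (a + b + 1) / 2) ^ 2
      + (1 / 4 - a ^ 2) / (4 * sin (t / 2) ^ 2) + (1 / 4 - b ^ 2) / (4 * cos (t / 2) ^ 2) := by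
  have hsin_sq : sin t ^ 2 = (1 - cos t) * (1 + cos t) := by rw [sin_sq]; ring
  have hprod : (1 - cos t) * (1 + cos t) ≠ 0 := hsin_sq ▸ pow_ne_zero 2 ht
  have hsub : 1 - cos t ≠ 0 := left_ne_zero_of_mul hprod
  have hadd : 1 + cos t ≠ 0 := right_ne_zero_of_mul hprod
  rw [jacobiQ_eq_div_sin_sq, hsin_sq, four_mul_sin_half_sq, four_mul_cos_half_sq]
  field_simp
  ring

theorem jacobiQ_pos_general (a b ν : ℝ) (ha : a ∈ Ioo (-(1 : ℝ) / 2) (1 / 2))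
    (hb : b ∈ Ioo (-(1 : ℝ) / 2) (1 / 2)) :
    ∀ t ∈ Ioo 0 Real.pi, 0 < jacobiQ a b ν t := by
  rintro t ⟨ht₀, htπ⟩
  have ha' : 0 < 1 / 4 - a ^ 2 := by nlinarith [ha.1, ha.2]
  have hb' : 0 < 1 / 4 - b ^ 2 := by nlinarith [hb.1, hb.2]
  have hsin : 0 < sin (t / 2) := sin_pos_of_pos_of_lt_pi (by linarith) (by linarith)
  have hcos : 0 < cos (t / 2) := cos_pos_of_mem_Ioo ⟨by linarith, by linarith⟩
  rw [jacobiQ_eq_half_angle a b ν t (sin_pos_of_pos_of_lt_pi ht₀ htπ).ne']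
  positivity

theorem jacobiQ_pos (a b ν : ℝ) (ha : a ∈ Ioo (-(1 : ℝ) / 2) (1 / 2))
    (hb : b ∈ Ioo (-(1 : ℝ) / 2) (1 / 2)) (hν : 0 ≤ ν) :
    ∀ t ∈ Ioo 0 Real.pi, 0 < jacobiQ a b ν t :=
  jacobiQ_pos_general a b ν ha hb
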